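/- For every n ∈ ℕ with n ≥ 3, the Euler numbers and Lucas numbers satisfy n·E_{n−1} − (L_n − 4·L_{n−1}) = Σ_{k=3}^{n} (k·E_{k−1} − 3(k−1)·E_{k−2})·L_{n−k+1} + 5·Σ_{k=3}^{n} Σ_{s=1}^{k−2} (−1)^{k−s}·2^{k−s−2}·s·E_{s−1}·L_{n−k+1}. -/

import Mathlib

/-! Put `c_k` for the bracketed coefficient plus five times its inner alternating sum, so that
the right-hand side is the Lucas convolution `T_n = Σ_{k=3}^n c_k L_{n-k+1}`. Since
`L_{m+2} = L_{m+1} + L_m` with `L_0 = 2`, `T_{n+2} = T_{n+1} + T_n + c_{n+2} + 2 c_{n+1}`.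
In `c_{k+3} + 2 c_{k+2}` the alternating sums telescope to a single term, leaving
`(k+3) E_{k+2} - (k+2) E_{k+1} - (k+1) E_k`, which is exactly the amount by which the left-hand
side fails the same recurrence. Hence both sides satisfy one second-order recurrence for `n ≥ 2`,
and they agree at `n = 2, 3` because `E_0 = 1` and `E_1 = -1/2`, the values at `z = 0` of the
generating function and of its derivative. -/

noncomputable section

/-- `Eu x k` is the Euler polynomial `E_k(x)`, characterized by the generating function
`(2/(e^z+1)) e^{xz} = Σ_k E_k(x) z^k / k!` for `|z| < π`. -/
def IsEulerFamily (Eu : ℝ → ℕ → ℝ) : Prop :=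
  ∀ x z : ℝ, |z| < Real.pi →
    HasSum (fun k : ℕ => Eu x k * z ^ k / (Nat.factorial k : ℝ))
      (2 / (Real.exp z + 1) * Real.exp (x * z))

/-- The Lucas sequence: `L_1 = 1`, `L_2 = 3`, `L_{m+2} = L_{m+1} + L_m` (so `L_0 = 2`). -/
def lucasSeq : ℕ → ℕ
  | 0 => 2
  | 1 => 1
  | m + 2 => lucasSeq (m + 1) + lucasSeq m

theorem lucasSeq_add_two (m : ℕ) : lucasSeq (m + 2) = lucasSeq (m + 1) + lucasSeq m := rfl

theorem hasFPowerSeriesAt_ofScalars_of_hasSum {𝕜 : Type*} [NontriviallyNormedField 𝕜]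
    {a : ℕ → 𝕜} {f : 𝕜 → 𝕜} {r : ℝ} (hr : 0 < r)
    (h : ∀ z : 𝕜, ‖z‖ < r → HasSum (fun k => a k * z ^ k) (f z)) :
    HasFPowerSeriesAt f (FormalMultilinearSeries.ofScalars 𝕜 a) 0 := by
  rw [hasFPowerSeriesAt_iff]
  filter_upwards [Metric.ball_mem_nhds (0 : 𝕜) hr] with z hz
  simpa [mul_comm] using h z (by simpa using hz)

namespace IsEulerFamily

variable {Eu : ℝ → ℕ → ℝ}

theorem hasFPowerSeriesAt (hEu : IsEulerFamily Eu) :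
    HasFPowerSeriesAt (fun z => 2 / (Real.exp z + 1))
      (FormalMultilinearSeries.ofScalars ℝ fun k => Eu 0 k / k.factorial) 0 :=
  hasFPowerSeriesAt_ofScalars_of_hasSum Real.pi_pos fun z hz => by
    simpa [mul_div_right_comm] using hEu 0 z hz

theorem eulerNumber_zero (hEu : IsEulerFamily Eu) : Eu 0 0 = 1 := by
  simpa [FormalMultilinearSeries.ofScalars_apply_eq, one_add_one_eq_two] using
    hEu.hasFPowerSeriesAt.coeff_zero (fun _ => 1)

theorem eulerNumber_one (hEu : IsEulerFamily Eu) : Eu 0 1 = -(1 / 2) := by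
  have hps := hEu.hasFPowerSeriesAt.hasDerivAt
  have hd : HasDerivAt (fun z => 2 / (Real.exp z + 1)) (-(1 / 2)) 0 := by
    have := (Real.hasDerivAt_exp 0).add_const 1 |>.inv (by positivity) |>.const_mul 2
    norm_num at this
    simpa [div_eq_mul_inv] using this
  simpa [FormalMultilinearSeries.ofScalars_apply_eq] using hps.unique hd

end IsEulerFamily

theorem eq_zero_of_add_two_eq_add {R : Type*} [AddMonoid R] {F : ℕ → R} {a : ℕ}
    (hrec : ∀ n, a ≤ n → F (n + 2) = F (n + 1) + F n) (h₀ : F a = 0) (h₁ : F (a + 1) = 0)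
    {n : ℕ} (hn : a ≤ n) : F n = 0 := by
  have hpair : F n = 0 ∧ F (n + 1) = 0 := by
    induction n, hn using Nat.le_induction with
    | base => exact ⟨h₀, h₁⟩
    | succ n hn ih => exact ⟨ih.2, by rw [hrec n hn, ih.1, ih.2, add_zero]⟩
  exact hpair.1

section EulerLucas

open Finset

variable {R : Type*} [CommRing R]

def eulerLucasTail (e : ℕ → R) (k : ℕ) : R :=
  ∑ s ∈ Icc 1 (k - 2), (-1) ^ (k - s) * 2 ^ (k - s - 2) * (s : R) * e (s - 1)

def eulerLucasCoeff (e : ℕ → R) (k : ℕ) : R :=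
  (k : R) * e (k - 1) - 3 * ((k : R) - 1) * e (k - 2) + 5 * eulerLucasTail e k

def lucasConv (a : ℕ) (c : ℕ → R) (n : ℕ) : R :=
  ∑ k ∈ Icc a n, c k * lucasSeq (n - k + 1)

theorem eulerLucasTail_add_three (e : ℕ → R) (k : ℕ) :
    eulerLucasTail e (k + 3) + 2 * eulerLucasTail e (k + 2) = (k + 1) * e k := by
  have hcancel : ∀ s ∈ Icc 1 k,
      (-1 : R) ^ (k + 3 - s) * 2 ^ (k + 3 - s - 2) * (s : R) * e (s - 1)
        + 2 * ((-1) ^ (k + 2 - s) * 2 ^ (k + 2 - s - 2) * (s : R) * e (s - 1)) = 0 := by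
    intro s hs
    obtain ⟨j, rfl⟩ : ∃ j, k = s + j := ⟨k - s, by grind⟩
    rw [show s + j + 3 - s = j + 3 by omega, show s + j + 2 - s = j + 2 by omega,
      show j + 3 - 2 = j + 1 by omega, show j + 2 - 2 = j by omega]
    ring
  rw [eulerLucasTail, eulerLucasTail, show k + 3 - 2 = k + 1 by omega,
    show k + 2 - 2 = k by omega, sum_Icc_succ_top (by omega), mul_sum, add_right_comm,
    ← sum_add_distrib, sum_eq_zero hcancel, show k + 3 - (k + 1) = 2 by omega]
  simp

theorem eulerLucasCoeff_add_three (e : ℕ → R) (k : ℕ) :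
    eulerLucasCoeff e (k + 3) + 2 * eulerLucasCoeff e (k + 2)
      = (k + 3) * e (k + 2) - (k + 2) * e (k + 1) - (k + 1) * e k := by
  simp only [eulerLucasCoeff, Nat.add_sub_cancel, show k + 3 - 1 = k + 2 by omega,
    show k + 3 - 2 = k + 1 by omega, show k + 2 - 1 = k + 1 by omega]
  push_cast
  linear_combination 5 * eulerLucasTail_add_three e k

theorem lucasConv_add_two (a : ℕ) (c : ℕ → R) {n : ℕ} (hn : a ≤ n + 1) :
    lucasConv a c (n + 2)
      = lucasConv a c (n + 1) + lucasConv a c n + c (n + 2) + 2 * c (n + 1) := by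
  have hsplit : ∀ k ∈ Icc a (n + 1), c k * (lucasSeq (n + 2 - k + 1) : R)
      = c k * lucasSeq (n + 1 - k + 1) + c k * lucasSeq (n + 1 - k) := by
    intro k hk
    rw [show n + 2 - k + 1 = n + 1 - k + 2 by grind, lucasSeq_add_two]
    push_cast
    ring
  have hshift : ∑ k ∈ Icc a (n + 1), c k * (lucasSeq (n + 1 - k) : R)
      = lucasConv a c n + 2 * c (n + 1) := by
    rw [sum_Icc_succ_top hn, lucasConv, Nat.sub_self, lucasSeq, Nat.cast_ofNat, mul_comm]
    refine congrArg (· + _) (sum_congr rfl fun k hk => ?_)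
    rw [Nat.sub_add_comm (mem_Icc.1 hk).2]
  rw [lucasConv, sum_Icc_succ_top (by omega), sum_congr rfl hsplit, sum_add_distrib, hshift,
    Nat.sub_self, lucasSeq, Nat.cast_one, mul_one]
  simp only [lucasConv]
  ring

theorem mul_sub_lucasSeq_eq_lucasConv_eulerLucasCoeff (e : ℕ → R)
    (h₀ : e 0 = 1) (h₁ : 2 * e 1 = -1) {n : ℕ} (hn : 2 ≤ n) :
    (n : R) * e (n - 1) - ((lucasSeq n : R) - 4 * lucasSeq (n - 1))
      = lucasConv 3 (eulerLucasCoeff e) n := by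
  refine sub_eq_zero.1 (eq_zero_of_add_two_eq_add (a := 2)
    (F := fun n => (n : R) * e (n - 1) - ((lucasSeq n : R) - 4 * lucasSeq (n - 1))
      - lucasConv 3 (eulerLucasCoeff e) n) ?_ ?_ ?_ hn)
  · rintro n hn
    obtain ⟨m, rfl⟩ : ∃ m, n = m + 1 := ⟨n - 1, by omega⟩
    rw [lucasConv_add_two 3 _ (by omega)]
    simp only [show m + 1 + 2 = m + 3 by omega, show m + 1 + 1 = m + 2 by omega,
      show m + 3 - 1 = m + 2 by omega, show m + 2 - 1 = m + 1 by omega, Nat.add_sub_cancel,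
      show lucasSeq (m + 3) = lucasSeq (m + 2) + lucasSeq (m + 1) from rfl,
      show lucasSeq (m + 2) = lucasSeq (m + 1) + lucasSeq m from rfl]
    push_cast
    linear_combination (-1 : R) * eulerLucasCoeff_add_three e m
  · simp only [Nat.cast_ofNat, Nat.add_one_sub_one, lucasSeq, Nat.reduceAdd, Nat.cast_one,
      mul_one, lucasConv, Nat.lt_add_one, Icc_eq_empty_of_lt, sum_empty, sub_zero]
    linear_combination h₁
  · simp only [Nat.reduceAdd, Nat.cast_ofNat, Nat.add_one_sub_one, lucasSeq, lucasConv,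
      Icc_self, eulerLucasCoeff, eulerLucasTail, sum_singleton, Nat.reduceSub, even_two,
      Even.neg_pow, one_pow, tsub_self, pow_zero, mul_one, Nat.cast_one, one_mul, zero_add]
    linear_combination 3 * h₁ - 5 * h₀

end EulerLucas

theorem euler_number_lucas_identity' (Eu : ℝ → ℕ → ℝ) (hEu : IsEulerFamily Eu)
    (n : ℕ) (hn : 3 ≤ n) :
    (n : ℝ) * Eu 0 (n - 1) - ((lucasSeq n : ℝ) - 4 * (lucasSeq (n - 1) : ℝ))
      = ∑ k ∈ Finset.Icc 3 n,
          ((k : ℝ) * Eu 0 (k - 1) - 3 * ((k : ℝ) - 1) * Eu 0 (k - 2)) *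
            (lucasSeq (n - k + 1) : ℝ)
        + 5 * ∑ k ∈ Finset.Icc 3 n, ∑ s ∈ Finset.Icc 1 (k - 2),
            (-1 : ℝ) ^ (k - s) * 2 ^ (k - s - 2) * (s : ℝ) * Eu 0 (s - 1) *
              (lucasSeq (n - k + 1) : ℝ) := by
  have hrhs : lucasConv 3 (eulerLucasCoeff (Eu 0)) n
      = ∑ k ∈ Finset.Icc 3 n,
          ((k : ℝ) * Eu 0 (k - 1) - 3 * ((k : ℝ) - 1) * Eu 0 (k - 2)) *
            (lucasSeq (n - k + 1) : ℝ)
        + 5 * ∑ k ∈ Finset.Icc 3 n, ∑ s ∈ Finset.Icc 1 (k - 2),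
            (-1 : ℝ) ^ (k - s) * 2 ^ (k - s - 2) * (s : ℝ) * Eu 0 (s - 1) *
              (lucasSeq (n - k + 1) : ℝ) := by
    simp only [lucasConv, eulerLucasCoeff, eulerLucasTail, add_mul, Finset.sum_add_distrib,
      Finset.mul_sum, Finset.sum_mul, mul_assoc]
  rw [← hrhs]
  exact mul_sub_lucasSeq_eq_lucasConv_eulerLucasCoeff (Eu 0) hEu.eulerNumber_zero
    (by rw [hEu.eulerNumber_one]; norm_num) (by omega)

end
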